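/- Let G be a group such that for every nontrivial normal subgroup N of G, the quotient G/N has property BF. Then every subgroup H of G of finite bi-index is quasi-prodense in G. -/
import Mathlib

open scoped Pointwise

/-- A subgroup `H ≤ G` has finite bi-index if the set of double cosets
`{HgH : g ∈ G}` is finite. -/
def FiniteBiIndex {G : Type*} [Group G] (H : Subgroup G) : Prop :=
  {S : Set G | ∃ g : G, S = (H : Set G) * {g} * (H : Set G)}.Finite

/-- The set of double cosets of a subgroup `H` of a group `M` with representatives in a
subgroup `G` of `M`; for `H ≤ G` this is the set of double cosets `H\G/H`. -/
def doubleCosets {M : Type*} [Group M] (G H : Subgroup M) : Set (Set M) :=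
  {S : Set M | ∃ g ∈ G, S = (H : Set M) * {g} * (H : Set M)}

/-- The pro-normal closure of a subgroup `H ≤ G`: the intersection of the subsets `HN`,
over all nontrivial normal subgroups `N` of `G`. -/
def pronormalClosure {G : Type*} [Group G] (H : Subgroup G) : Subgroup G where
  carrier := ⋂ N ∈ {N : Subgroup G | N.Normal ∧ N ≠ ⊥}, (H : Set G) * (N : Set G)
  one_mem' := by
    simp only [Set.mem_iInter]
    rintro N ⟨hN, -⟩
    exact ⟨1, H.one_mem, 1, N.one_mem, mul_one 1⟩
  mul_mem' := by
    intro a b ha hb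
    simp only [Set.mem_iInter] at ha hb ⊢
    rintro N hN
    obtain ⟨h₁, hh₁, n₁, hn₁, rfl⟩ := ha N hN
    obtain ⟨h₂, hh₂, n₂, hn₂, rfl⟩ := hb N hN
    refine ⟨h₁ * h₂, H.mul_mem hh₁ hh₂, (h₂⁻¹ * n₁ * h₂) * n₂, ?_, by group⟩
    refine N.mul_mem ?_ hn₂
    have := hN.1.conj_mem n₁ hn₁ h₂⁻¹
    simpa using this
  inv_mem' := by
    intro a ha
    simp only [Set.mem_iInter] at ha ⊢
    rintro N hN
    obtain ⟨h, hh, n, hn, rfl⟩ := ha N hN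
    refine ⟨h⁻¹, H.inv_mem hh, h * n⁻¹ * h⁻¹, hN.1.conj_mem n⁻¹ (N.inv_mem hn) h, by group⟩

/-- A subgroup `H ≤ G` is quasi-prodense if its pro-normal closure has finite index. -/
def QuasiProdense {G : Type*} [Group G] (H : Subgroup G) : Prop :=
  (pronormalClosure H).index ≠ 0

/-- `K` is a normal subgroup of the subgroup `H` (both subgroups of an ambient group). -/
def NormalIn {M : Type*} [Group M] (H K : Subgroup M) : Prop :=
  K ≤ H ∧ ∀ h ∈ H, ∀ k ∈ K, h * k * h⁻¹ ∈ K

/-- `K` is a subnormal subgroup of the subgroup `H`. -/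
def SubnormalIn {M : Type*} [Group M] (H K : Subgroup M) : Prop :=
  ∃ (m : ℕ) (c : ℕ → Subgroup M), c 0 = K ∧ c m = H ∧ ∀ i < m, NormalIn (c (i + 1)) (c i)

/-- The iterated derived subgroups of a subgroup. -/
def iterDerived {M : Type*} [Group M] (H : Subgroup M) : ℕ → Subgroup M
  | 0 => H
  | (k + 1) => ⁅iterDerived H k, iterDerived H k⁆

section AuxLemmas
section Aux
variable {G : Type*} [Group G]

/-- HN is a union of the double cosets of H it contains. -/
lemma mul_eq_sUnion (H N : Subgroup G) [N.Normal] :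
    (H : Set G) * (N : Set G) =
      ⋃₀ {D : Set G | (∃ g : G, D = (H : Set G) * {g} * (H : Set G)) ∧
        D ⊆ (H : Set G) * (N : Set G)} := by
  apply Set.Subset.antisymm
  · intro x hx
    refine Set.mem_sUnion.2 ⟨(H : Set G) * {x} * (H : Set G), ⟨⟨x, rfl⟩, ?_⟩, ?_⟩
    · rintro y ⟨_, ⟨h₁, hh₁, _, rfl, rfl⟩, h₂, hh₂, rfl⟩
      obtain ⟨h, hh, n, hn, rfl⟩ := hx
      refine ⟨h₁ * h * h₂, H.mul_mem (H.mul_mem hh₁ hh) hh₂,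
        h₂⁻¹ * n * h₂, ?_, by group⟩
      simpa using ‹Subgroup.Normal N›.conj_mem n hn h₂⁻¹
    · exact ⟨x, ⟨1, H.one_mem, x, rfl, one_mul x⟩, 1, H.one_mem, mul_one x⟩
  · exact Set.sUnion_subset fun D hD => hD.2

/-- Image of H in G/N has finite bi-index. -/
lemma finiteBiIndex_map (H N : Subgroup G) [N.Normal] (hH : FiniteBiIndex H) :
    FiniteBiIndex (H.map (QuotientGroup.mk' N)) := by
  set π := QuotientGroup.mk' N
  have hsurj : Function.Surjective π := QuotientGroup.mk'_surjective N
  have : {S : Set (G ⧸ N) | ∃ x, S = (H.map π : Set (G ⧸ N)) * {x} * (H.map π : Set (G ⧸ N))}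
      = (Set.image (⇑π)) '' {S : Set G | ∃ g : G, S = (H : Set G) * {g} * (H : Set G)} := by
    ext S
    constructor
    · rintro ⟨x, rfl⟩
      obtain ⟨g, rfl⟩ := hsurj x
      refine ⟨(H : Set G) * {g} * (H : Set G), ⟨g, rfl⟩, ?_⟩
      rw [Subgroup.coe_map, Set.image_mul, Set.image_mul, Set.image_singleton]
    · rintro ⟨_, ⟨g, rfl⟩, rfl⟩
      exact ⟨π g, by rw [Subgroup.coe_map, Set.image_mul, Set.image_mul, Set.image_singleton]⟩
  rw [FiniteBiIndex, this]
  exact hH.image _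

end Aux
end AuxLemmas

/-- If every proper quotient of `G` has property `BF`, then every subgroup of `G` of
finite bi-index is quasi-prodense. -/
theorem finiteBiIndex_quasiProdense {G : Type*} [Group G]
    (hBF : ∀ (N : Subgroup G) [N.Normal], N ≠ ⊥ →
      ∀ K : Subgroup (G ⧸ N), FiniteBiIndex K → K.index ≠ 0)
    (H : Subgroup G) (hH : FiniteBiIndex H) : QuasiProdense H := by
    classical
  set S : Set (Subgroup G) := {N | N.Normal ∧ N ≠ ⊥} with hS
  set 𝒮 : Set (Subgroup G) := {K | ∃ N ∈ S, K = H ⊔ N} with h𝒮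
  have hidx : ∀ K ∈ 𝒮, K.index ≠ 0 := by
    rintro K ⟨N, ⟨hNn, hNbot⟩, rfl⟩
    haveI := hNn
    have h1 := hBF N hNbot (H.map (QuotientGroup.mk' N)) (finiteBiIndex_map H N hH)
    have h2 : ((H.map (QuotientGroup.mk' N)).comap (QuotientGroup.mk' N)).index
        = (H.map (QuotientGroup.mk' N)).index :=
      Subgroup.index_comap_of_surjective _ (QuotientGroup.mk'_surjective N)
    rw [Subgroup.comap_map_eq, QuotientGroup.ker_mk'] at h2
    rw [← h2] at h1
    exact h1
  have hinj : Set.InjOn (fun K : Subgroup G =>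
      {D : Set G | (∃ g : G, D = (H : Set G) * {g} * (H : Set G)) ∧ D ⊆ (K : Set G)}) 𝒮 := by
    rintro K₁ ⟨N₁, hN₁, rfl⟩ K₂ ⟨N₂, hN₂, rfl⟩ heq
    haveI := hN₁.1; haveI := hN₂.1
    apply SetLike.coe_injective
    rw [Subgroup.mul_normal H N₁, Subgroup.mul_normal H N₂, mul_eq_sUnion H N₁,
      mul_eq_sUnion H N₂, ← Subgroup.mul_normal H N₁, ← Subgroup.mul_normal H N₂]
    simp only at heq
    rw [heq]
  have hfin : 𝒮.Finite := by
    apply Set.Finite.of_finite_image ?_ hinj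
    apply hH.finite_subsets.subset
    rintro _ ⟨K, hK, rfl⟩
    exact fun D hD => hD.1
  have hcar : (pronormalClosure H : Set G) = ⋂ K ∈ 𝒮, (K : Set G) := by
    show (⋂ N ∈ S, (H : Set G) * (N : Set G)) = _
    ext x
    simp only [Set.mem_iInter]
    constructor
    · rintro hx K ⟨N, hN, rfl⟩
      haveI := hN.1
      rw [Subgroup.mul_normal]
      exact hx N hN
    · intro hx N hN
      haveI := hN.1
      rw [← Subgroup.mul_normal]
      exact hx (H ⊔ N) ⟨N, hN, rfl⟩
  have heq : pronormalClosure H = sInf 𝒮 := by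
    apply SetLike.ext'
    rw [hcar, Subgroup.coe_sInf]
  rw [QuasiProdense, heq, sInf_eq_iInf']
  haveI : Finite 𝒮 := hfin
  exact Subgroup.index_iInf_ne_zero fun K => hidx K K.2
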